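/- Let φ ∈ ℝ. Then there exists a constant c(φ) > 0 such that for all p ∈ (0, ∞), the global curvature energy satisfies U_p(E_φ) ≤ c(φ)^p · U_p(E_{π/2}). -/

import Mathlib

open MeasureTheory Real
open scoped ENNReal NNReal Classical

/-- The Menger curvature of three points in `ℝⁿ`: the reciprocal of the circumradius,
`κ(x,y,z) = 2 dist(z, L_{x,y}) / (|x-z| |y-z|)` for pairwise distinct non-collinear points,
and `0` otherwise. -/
noncomputable def menger {n : ℕ} (x y z : EuclideanSpace ℝ (Fin n)) : ℝ :=
  if x ≠ y ∧ y ≠ z ∧ x ≠ z ∧ ¬ Collinear ℝ ({x, y, z} : Set (EuclideanSpace ℝ (Fin n)))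
  then 2 * Metric.infDist z (affineSpan ℝ ({x, y} : Set (EuclideanSpace ℝ (Fin n))) :
      Set (EuclideanSpace ℝ (Fin n))) / (dist x z * dist y z)
  else 0

/-- The point `(a, b) ∈ ℝ²` (with the Euclidean metric). -/
noncomputable def pt (a b : ℝ) : EuclideanSpace ℝ (Fin 2) :=
  (WithLp.equiv 2 (Fin 2 → ℝ)).symm ![a, b]

/-- The one-corner set `E_φ = ([0,1) × {0}) ∪ [0,1)·(cos φ, sin φ)`. -/
noncomputable def Eset (φ : ℝ) : Set (EuclideanSpace ℝ (Fin 2)) :=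
  {x | ∃ t ∈ Set.Ico (0:ℝ) 1, x = pt t 0} ∪
    {x | ∃ t ∈ Set.Ico (0:ℝ) 1, x = t • pt (Real.cos φ) (Real.sin φ)}

/-- Integral Menger curvature `M_p(X)` (innermost integration in `x`). -/
noncomputable def Mp (p : ℝ) (X : Set (EuclideanSpace ℝ (Fin 2))) : ℝ≥0∞ :=
  ∫⁻ z in X, ∫⁻ y in X, ∫⁻ x in X,
    (ENNReal.ofReal (menger x y z)) ^ p ∂μH[1] ∂μH[1] ∂μH[1]

/-- Intermediate energy `I_p(X)`. -/
noncomputable def Ip (p : ℝ) (X : Set (EuclideanSpace ℝ (Fin 2))) : ℝ≥0∞ :=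
  ∫⁻ y in X, ∫⁻ x in X,
    (⨆ z ∈ X, ENNReal.ofReal (menger x y z)) ^ p ∂μH[1] ∂μH[1]

/-- Global curvature energy `U_p(X)`. -/
noncomputable def Up (p : ℝ) (X : Set (EuclideanSpace ℝ (Fin 2))) : ℝ≥0∞ :=
  ∫⁻ x in X, (⨆ y ∈ X, ⨆ z ∈ X, ENNReal.ofReal (menger x y z)) ^ p ∂μH[1]

/-! If `sin φ = 0`, then `E_φ` lies on a line and all its curvatures vanish. Otherwise let
`σ = |sin φ|`, and let `x` lie at distance `t > 0` from the corner of `E_φ`. For `y, z ∈ E_φ` we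
have `κ(x, y, z) ≤ 2 / (σ t)`: if `z` lies on the other ray, `κ ≤ 2 / |x - z| ≤ 2 / (σ t)`; if `z`
lies on the ray of `x`, then `y = c v` lies on the other ray, the line `xy` passes within
`|x - z| |c| / t` of `z`, and `|y - z| ≥ σ |c|`. In `E_{π/2}` the point `x`, the corner and the
point at distance `t` on the other ray form a triangle of curvature `√2 / t`. Both energies are
integrals over two isometric copies of `[0, 1)`, whence
`U_p(E_φ) ≤ (√2 / σ)^p · 2 ∫₀¹ (√2 / t)^p dt ≤ (√2 / σ)^p · U_p(E_{π/2})`. -/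

section Menger

variable {n : ℕ}

lemma menger_comm (x y z : EuclideanSpace ℝ (Fin n)) : menger x y z = menger y x z := by
  simp only [menger, Set.insert_comm x y, Set.pair_comm x y, mul_comm (dist x z), ne_comm (a := x)]
  congr 1
  exact propext ⟨fun ⟨h1, h2, h3, h4⟩ => ⟨h1, h3, h2, h4⟩, fun ⟨h1, h2, h3, h4⟩ => ⟨h1, h3, h2, h4⟩⟩

lemma menger_eq_zero_of_collinear {x y z : EuclideanSpace ℝ (Fin n)}
    (h : Collinear ℝ ({x, y, z} : Set (EuclideanSpace ℝ (Fin n)))) : menger x y z = 0 :=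
  if_neg fun hne => hne.2.2.2 h

lemma menger_le (x y z : EuclideanSpace ℝ (Fin n)) :
    menger x y z ≤ 2 * Metric.infDist z (affineSpan ℝ {x, y}) / (dist x z * dist y z) := by
  unfold menger
  split_ifs
  · exact le_rfl
  · have := Metric.infDist_nonneg (x := z) (s := affineSpan ℝ {x, y})
    positivity

lemma menger_le_two_div_dist (x y z : EuclideanSpace ℝ (Fin n)) :
    menger x y z ≤ 2 / dist x z := by
  have hzy : Metric.infDist z (affineSpan ℝ {x, y}) ≤ dist y z := by
    rw [dist_comm]
    exact Metric.infDist_le_dist_of_mem (right_mem_affineSpan_pair ℝ x y)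
  calc menger x y z ≤ 2 * Metric.infDist z (affineSpan ℝ {x, y}) / (dist x z * dist y z) :=
        menger_le x y z
    _ ≤ 2 * dist y z / (dist x z * dist y z) := by gcongr
    _ ≤ 2 / dist x z := by
        rcases eq_or_ne (dist y z) 0 with h | h
        · simp [h]; positivity
        · rw [mul_comm (dist x z), ← div_div, mul_div_cancel_right₀ _ h]

lemma menger_smul_le (u y : EuclideanSpace ℝ (Fin n)) {s : ℝ} (hs : s ≠ 0) (t : ℝ) :
    menger (s • u) y (t • u) ≤ 2 * ‖y‖ / (|s| * ‖u‖ * dist y (t • u)) := by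
  have hdist : dist (s • u) (t • u) = |s - t| * ‖u‖ := by
    rw [dist_eq_norm, ← sub_smul, norm_smul, Real.norm_eq_abs]
  have hinf : Metric.infDist (t • u) (affineSpan ℝ {s • u, y}) ≤ |s - t| * ‖y‖ / |s| := by
    -- `lineMap (s • u) y ((s - t) / s) = t • u + ((s - t) / s) • y`
    have hmem := AffineMap.lineMap_mem_affineSpan_pair ((s - t) / s) (s • u) y
    refine (Metric.infDist_le_dist_of_mem hmem).trans_eq ?_
    have : t • u - AffineMap.lineMap (s • u) y ((s - t) / s) = -((s - t) / s) • y := by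
      rw [AffineMap.lineMap_apply_module]
      match_scalars
      · field_simp; ring
      · field_simp
    rw [dist_eq_norm, this, norm_smul, Real.norm_eq_abs, abs_neg, abs_div]
    ring
  calc menger (s • u) y (t • u)
      ≤ 2 * Metric.infDist (t • u) (affineSpan ℝ {s • u, y}) /
          (dist (s • u) (t • u) * dist y (t • u)) := menger_le _ _ _
    _ ≤ 2 * (|s - t| * ‖y‖ / |s|) / (|s - t| * ‖u‖ * dist y (t • u)) := by
        rw [hdist]; gcongr
    _ ≤ 2 * ‖y‖ / (|s| * ‖u‖ * dist y (t • u)) := by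
        rcases eq_or_ne (s - t) 0 with h | h
        · simp [h]; positivity
        · apply le_of_eq
          field_simp

lemma collinear_of_subset_span {s : Set (EuclideanSpace ℝ (Fin n))} {u : EuclideanSpace ℝ (Fin n)}
    (h : s ⊆ ℝ ∙ u) : Collinear ℝ s := by
  refine (collinear_iff_exists_forall_eq_smul_vadd s).2 ⟨0, u, fun p hp => ?_⟩
  obtain ⟨r, rfl⟩ := Submodule.mem_span_singleton.1 (h hp)
  exact ⟨r, by simp⟩

lemma menger_smul_le_of_mem_span {u v : EuclideanSpace ℝ (Fin n)} (hu : ‖u‖ = 1)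
    (hv : ‖v‖ = 1) {σ : ℝ} (hσ : 0 < σ) (hu_far : ∀ a b : ℝ, |a| * σ ≤ dist (a • u) (b • v))
    (hv_far : ∀ a b : ℝ, |b| * σ ≤ dist (a • u) (b • v)) {s : ℝ} (hs : s ≠ 0)
    {y z : EuclideanSpace ℝ (Fin n)} (hy : y ∈ ℝ ∙ u ∨ y ∈ ℝ ∙ v) (hz : z ∈ ℝ ∙ u ∨ z ∈ ℝ ∙ v) :
    menger (s • u) y z ≤ 2 / (|s| * σ) := by
  have hsσ : 0 < |s| * σ := by positivity
  have hsu : s • u ∈ ℝ ∙ u := Submodule.smul_mem _ s (Submodule.mem_span_singleton_self u)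
  rcases hz with hz | hz <;> obtain ⟨t, rfl⟩ := Submodule.mem_span_singleton.1 hz
  · rcases hy with hy | hy
    · rw [menger_eq_zero_of_collinear (collinear_of_subset_span (u := u) (by
        rintro w (rfl | rfl | rfl) <;> assumption))]
      positivity
    obtain ⟨c, rfl⟩ := Submodule.mem_span_singleton.1 hy
    calc menger (s • u) (c • v) (t • u) ≤ 2 * ‖c • v‖ / (|s| * ‖u‖ * dist (c • v) (t • u)) :=
          menger_smul_le u (c • v) hs t
      _ = 2 * |c| / (|s| * dist (t • u) (c • v)) := by
          rw [norm_smul, hu, hv, Real.norm_eq_abs, dist_comm]; ring_nf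
      _ ≤ 2 / (|s| * σ) := by
          rcases eq_or_ne c 0 with rfl | hc
          · simp only [abs_zero, mul_zero, zero_div]; positivity
          calc 2 * |c| / (|s| * dist (t • u) (c • v)) ≤ 2 * |c| / (|s| * (|c| * σ)) := by
                gcongr; exact hv_far t c
            _ = 2 / (|s| * σ) := by field_simp
  · calc menger (s • u) y (t • v) ≤ 2 / dist (s • u) (t • v) := menger_le_two_div_dist _ _ _
      _ ≤ 2 / (|s| * σ) := by gcongr; exact hu_far s t

end Menger

lemma pt_apply (a b : ℝ) (i : Fin 2) : pt a b i = ![a, b] i := rfl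

lemma smul_pt (t a b : ℝ) : t • pt a b = pt (t * a) (t * b) := by
  ext i; fin_cases i <;> simp [pt_apply]

lemma add_pt (a b c d : ℝ) : pt a b + pt c d = pt (a + c) (b + d) := by
  ext i; fin_cases i <;> simp [pt_apply]

lemma sub_pt (a b c d : ℝ) : pt a b - pt c d = pt (a - c) (b - d) := by
  ext i; fin_cases i <;> simp [pt_apply]

lemma norm_pt (a b : ℝ) : ‖pt a b‖ = √(a ^ 2 + b ^ 2) := by
  simp [EuclideanSpace.norm_eq, Fin.sum_univ_two, pt_apply]

lemma pt_inj {a b c d : ℝ} : pt a b = pt c d ↔ a = c ∧ b = d :=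
  ⟨fun h => ⟨by simpa [pt_apply] using congrArg (· 0) h, by simpa [pt_apply] using congrArg (· 1) h⟩,
    fun ⟨hac, hbd⟩ => hac ▸ hbd ▸ rfl⟩

lemma norm_pt_cos_sin (φ : ℝ) : ‖pt (cos φ) (sin φ)‖ = 1 := by
  rw [norm_pt, cos_sq_add_sin_sq, sqrt_one]

lemma norm_pt_one_zero : ‖pt 1 0‖ = 1 := by
  simpa using norm_pt_cos_sin 0

lemma abs_mul_abs_sin_le_dist_left (φ a b : ℝ) :
    |a| * |sin φ| ≤ dist (a • pt 1 0) (b • pt (cos φ) (sin φ)) := by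
  rw [dist_eq_norm, smul_pt, smul_pt, sub_pt, norm_pt, ← abs_mul, ← sqrt_sq_eq_abs]
  apply sqrt_le_sqrt
  have hgap : (a * 1 - b * cos φ) ^ 2 + (a * 0 - b * sin φ) ^ 2 - (a * sin φ) ^ 2 =
      (a * cos φ - b) ^ 2 := by
    linear_combination (b ^ 2 - a ^ 2) * sin_sq_add_cos_sq φ
  linarith [sq_nonneg (a * cos φ - b)]

lemma abs_mul_abs_sin_le_dist_right (φ a b : ℝ) :
    |b| * |sin φ| ≤ dist (a • pt 1 0) (b • pt (cos φ) (sin φ)) := by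
  rw [dist_eq_norm, smul_pt, smul_pt, sub_pt, norm_pt, ← abs_mul, ← sqrt_sq_eq_abs]
  apply sqrt_le_sqrt
  nlinarith [sq_nonneg (a - b * cos φ)]

lemma Eset_eq (φ : ℝ) :
    Eset φ = (· • pt 1 0) '' Set.Ico (0 : ℝ) 1 ∪ (· • pt (cos φ) (sin φ)) '' Set.Ico (0 : ℝ) 1 := by
  ext x
  simp only [Eset, Set.mem_union, Set.mem_ofPred_eq, Set.mem_image, smul_pt, mul_one, mul_zero,
    eq_comm (a := x)]

lemma mem_span_of_mem_Eset {φ : ℝ} {x : EuclideanSpace ℝ (Fin 2)} (hx : x ∈ Eset φ) :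
    x ∈ ℝ ∙ pt 1 0 ∨ x ∈ ℝ ∙ pt (cos φ) (sin φ) := by
  rw [Eset_eq] at hx
  rcases hx with ⟨t, -, rfl⟩ | ⟨t, -, rfl⟩
  · exact Or.inl (Submodule.mem_span_singleton.2 ⟨t, rfl⟩)
  · exact Or.inr (Submodule.mem_span_singleton.2 ⟨t, rfl⟩)

lemma sqrt_two_div_le_menger {s : ℝ} (hs : 0 < s) :
    √2 / s ≤ menger (pt s 0) (pt 0 s) (pt 0 0) := by
  have hxy : pt s 0 ≠ pt 0 s := fun h => hs.ne' (pt_inj.1 h).1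
  have hyz : pt 0 s ≠ pt 0 0 := fun h => hs.ne' (pt_inj.1 h).2
  have hxz : pt s 0 ≠ pt 0 0 := fun h => hs.ne' (pt_inj.1 h).1
  have hncol : ¬ Collinear ℝ {pt s 0, pt 0 s, pt 0 0} := by
    rw [collinear_iff_of_mem (p₀ := pt 0 0) (by simp)]
    rintro ⟨d, hd⟩
    obtain ⟨a, ha⟩ := hd (pt s 0) (by simp)
    obtain ⟨b, hb⟩ := hd (pt 0 s) (by simp)
    have e₁ := congrArg (· 0) ha
    have e₂ := congrArg (· 1) ha
    have e₃ := congrArg (· 0) hb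
    have e₄ := congrArg (· 1) hb
    simp only [vadd_eq_add, PiLp.add_apply, PiLp.smul_apply, pt_apply, smul_eq_mul] at e₁ e₂ e₃ e₄
    simp only [Matrix.cons_val_zero, Matrix.cons_val_one, add_zero] at e₁ e₂ e₃ e₄
    -- `(a d₀)(b d₁) = (a d₁)(b d₀)`, i.e. `s ^ 2 = 0`
    have : s * s = 0 := by linear_combination (b * d 1) * e₁ + s * e₄ - (b * d 0) * e₂
    exact hs.ne' (mul_self_eq_zero.1 this)
  have hdist : ∀ a b : ℝ, dist (pt a b) (pt 0 0) = √(a ^ 2 + b ^ 2) := fun a b => by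
    rw [dist_eq_norm, sub_pt, sub_zero, sub_zero, norm_pt]
  have hinf : s * √2 / 2 ≤ Metric.infDist (pt 0 0) (affineSpan ℝ {pt s 0, pt 0 s}) := by
    rw [Metric.le_infDist ⟨_, left_mem_affineSpan_pair ℝ _ _⟩]
    intro m hm
    obtain ⟨r, rfl⟩ := mem_affineSpan_pair_iff_exists_lineMap_eq.1 hm
    rw [AffineMap.lineMap_apply_module, smul_pt, smul_pt, add_pt, dist_comm, hdist,
      le_sqrt (by positivity) (by positivity), div_pow, mul_pow, sq_sqrt zero_le_two]
    nlinarith [mul_nonneg (sq_nonneg s) (sq_nonneg (2 * r - 1))]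
  have hs₂ : √(s ^ 2 + 0 ^ 2) = s := by simp [sqrt_sq hs.le]
  rw [menger, if_pos ⟨hxy, hyz, hxz, hncol⟩, hdist, hdist, add_comm (0 ^ 2), hs₂]
  calc √2 / s = 2 * (s * √2 / 2) / (s * s) := by field_simp
    _ ≤ _ := by gcongr

lemma isometry_smul_right {E : Type*} [NormedAddCommGroup E] [NormedSpace ℝ E] {v : E}
    (hv : ‖v‖ = 1) : Isometry (· • v : ℝ → E) :=
  Isometry.of_dist_eq fun a b => by
    rw [dist_eq_norm, ← sub_smul, norm_smul, hv, mul_one, Real.dist_eq, Real.norm_eq_abs]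

lemma Isometry.setLIntegral_image_hausdorffMeasure_one {E : Type*} [MetricSpace E]
    [MeasurableSpace E] [BorelSpace E] {f : ℝ → E} (hf : Isometry f) (g : E → ℝ≥0∞)
    {s : Set ℝ} : ∫⁻ x in f '' s, g x ∂μH[1] = ∫⁻ t in s, g (f t) := by
  have hemb : MeasurableEmbedding f := hf.isClosedEmbedding.measurableEmbedding
  have hrestrict : μH[1].restrict (f '' s) = (volume.restrict s).map f := by
    rw [← Measure.restrict_restrict_of_subset (Set.image_subset_range f s),
      ← hf.map_hausdorffMeasure (Or.inl zero_le_one), hemb.restrict_map,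
      Set.preimage_image_eq _ hf.injective, hausdorffMeasure_real]
  rw [hrestrict, hemb.lintegral_map]

lemma Up_eq_zero_of_subset_span {X : Set (EuclideanSpace ℝ (Fin 2))} (hXm : MeasurableSet X)
    {u : EuclideanSpace ℝ (Fin 2)} (hX : X ⊆ ℝ ∙ u) {p : ℝ} (hp : 0 < p) : Up p X = 0 := by
  refine setLIntegral_eq_zero hXm fun x hx => ?_
  have hsup : ⨆ y ∈ X, ⨆ z ∈ X, ENNReal.ofReal (menger x y z) = 0 := by
    simp only [ENNReal.iSup_eq_zero]
    intro y hy z hz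
    rw [menger_eq_zero_of_collinear (collinear_of_subset_span (u := u) (by
      rintro w (rfl | rfl | rfl) <;> apply hX <;> assumption)), ENNReal.ofReal_zero]
  simp [hsup, ENNReal.zero_rpow_of_pos hp]

lemma measurableSet_Eset (φ : ℝ) : MeasurableSet (Eset φ) := by
  rw [Eset_eq]
  exact ((isometry_smul_right norm_pt_one_zero).isClosedEmbedding.measurableEmbedding
    |>.measurableSet_image' measurableSet_Ico).union
    ((isometry_smul_right (norm_pt_cos_sin φ)).isClosedEmbedding.measurableEmbedding
    |>.measurableSet_image' measurableSet_Ico)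

lemma Eset_subset_span_of_sin_eq_zero {φ : ℝ} (hsin : sin φ = 0) : Eset φ ⊆ ℝ ∙ pt 1 0 := by
  have hv : pt (cos φ) (sin φ) ∈ ℝ ∙ pt 1 0 :=
    Submodule.mem_span_singleton.2 ⟨cos φ, by rw [smul_pt, hsin, mul_one, mul_zero]⟩
  intro x hx
  rcases mem_span_of_mem_Eset hx with hx | hx
  · exact hx
  · exact (Submodule.span_singleton_le_iff_mem _ _).2 hv hx

lemma iSup_menger_Eset_le {φ : ℝ} (hsin : sin φ ≠ 0) {t : ℝ} (ht : 0 < t)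
    {x : EuclideanSpace ℝ (Fin 2)} (hx : x = t • pt 1 0 ∨ x = t • pt (cos φ) (sin φ)) :
    ⨆ y ∈ Eset φ, ⨆ z ∈ Eset φ, ENNReal.ofReal (menger x y z) ≤
      ENNReal.ofReal (2 / (t * |sin φ|)) := by
  refine iSup₂_le fun y hy => iSup₂_le fun z hz => ENNReal.ofReal_le_ofReal ?_
  rw [← abs_of_pos ht]
  have hσ : 0 < |sin φ| := abs_pos.2 hsin
  rcases hx with rfl | rfl
  · exact menger_smul_le_of_mem_span norm_pt_one_zero (norm_pt_cos_sin φ) hσ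
      (abs_mul_abs_sin_le_dist_left φ) (abs_mul_abs_sin_le_dist_right φ) ht.ne'
      (mem_span_of_mem_Eset hy) (mem_span_of_mem_Eset hz)
  · exact menger_smul_le_of_mem_span (norm_pt_cos_sin φ) norm_pt_one_zero hσ
      (fun a b => by rw [dist_comm]; exact abs_mul_abs_sin_le_dist_right φ b a)
      (fun a b => by rw [dist_comm]; exact abs_mul_abs_sin_le_dist_left φ b a) ht.ne'
      (mem_span_of_mem_Eset hy).symm (mem_span_of_mem_Eset hz).symm

lemma sqrt_two_div_le_iSup_menger_Eset_pi_div_two {t : ℝ} (ht : t ∈ Set.Ioo (0 : ℝ) 1)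
    {x : EuclideanSpace ℝ (Fin 2)} (hx : x = t • pt 1 0 ∨ x = t • pt 0 1) :
    ENNReal.ofReal (√2 / t) ≤
      ⨆ y ∈ Eset (π / 2), ⨆ z ∈ Eset (π / 2), ENNReal.ofReal (menger x y z) := by
  have hmem : ∀ a ∈ Set.Ico (0 : ℝ) 1, pt a 0 ∈ Eset (π / 2) ∧ pt 0 a ∈ Eset (π / 2) :=
    fun a ha => ⟨Or.inl ⟨a, ha, rfl⟩, Or.inr ⟨a, ha, by simp [smul_pt]⟩⟩
  have h₀ := (hmem 0 ⟨le_rfl, one_pos⟩).1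
  have ht' := hmem t ⟨ht.1.le, ht.2⟩
  simp only [smul_pt, mul_one, mul_zero] at hx
  rcases hx with rfl | rfl
  · exact le_iSup₂_of_le (pt 0 t) ht'.2 <| le_iSup₂_of_le (pt 0 0) h₀ <|
      ENNReal.ofReal_le_ofReal (sqrt_two_div_le_menger ht.1)
  · exact le_iSup₂_of_le (pt t 0) ht'.1 <| le_iSup₂_of_le (pt 0 0) h₀ <|
      ENNReal.ofReal_le_ofReal (menger_comm (pt t 0) _ _ ▸ sqrt_two_div_le_menger ht.1)

lemma Up_Eset_le_of_sin_ne_zero {φ : ℝ} (hsin : sin φ ≠ 0) {p : ℝ} (hp : 0 < p) :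
    Up p (Eset φ) ≤ ENNReal.ofReal ((√2 / |sin φ|) ^ p) *
      (2 * ∫⁻ t in Set.Ioo 0 1, ENNReal.ofReal (√2 / t) ^ p) := by
  set C := ENNReal.ofReal ((√2 / |sin φ|) ^ p)
  set J := ∫⁻ t in Set.Ioo 0 1, ENNReal.ofReal (√2 / t) ^ p
  set F := fun x => (⨆ y ∈ Eset φ, ⨆ z ∈ Eset φ, ENNReal.ofReal (menger x y z)) ^ p
  have hsplit : ∀ t : ℝ, 0 < t →
      ENNReal.ofReal (2 / (t * |sin φ|)) ^ p = C * ENNReal.ofReal (√2 / t) ^ p := by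
    intro t ht
    have hσ : 0 < |sin φ| := abs_pos.2 hsin
    have h : 2 / (t * |sin φ|) = √2 / |sin φ| * (√2 / t) := by
      field_simp; rw [sq_sqrt zero_le_two]
    rw [h, ENNReal.ofReal_mul (by positivity), ENNReal.mul_rpow_of_nonneg _ _ hp.le,
      ENNReal.ofReal_rpow_of_pos (by positivity)]
  have hray : ∀ v : EuclideanSpace ℝ (Fin 2), ‖v‖ = 1 →
      (∀ t : ℝ, 0 < t → F (t • v) ≤ C * ENNReal.ofReal (√2 / t) ^ p) →
      ∫⁻ x in (· • v) '' Set.Ico (0 : ℝ) 1, F x ∂μH[1] ≤ C * J := by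
    intro v hv hF
    rw [(isometry_smul_right hv).setLIntegral_image_hausdorffMeasure_one,
      setLIntegral_congr Ioo_ae_eq_Ico.symm, ← lintegral_const_mul' _ _ ENNReal.ofReal_ne_top]
    exact setLIntegral_mono' measurableSet_Ioo fun t ht => hF t ht.1
  have hF : ∀ v, v = pt 1 0 ∨ v = pt (cos φ) (sin φ) →
      ∀ t : ℝ, 0 < t → F (t • v) ≤ C * ENNReal.ofReal (√2 / t) ^ p := by
    rintro v hv t ht
    rw [← hsplit t ht]
    refine ENNReal.rpow_le_rpow (iSup_menger_Eset_le hsin ht ?_) hp.le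
    rcases hv with rfl | rfl <;> simp
  calc Up p (Eset φ) = ∫⁻ x in Eset φ, F x ∂μH[1] := rfl
    _ ≤ ∫⁻ x in (· • pt 1 0) '' Set.Ico (0 : ℝ) 1, F x ∂μH[1] +
          ∫⁻ x in (· • pt (cos φ) (sin φ)) '' Set.Ico (0 : ℝ) 1, F x ∂μH[1] := by
        rw [Eset_eq]; exact lintegral_union_le _ _ _
    _ ≤ C * J + C * J := add_le_add (hray _ norm_pt_one_zero (hF _ (Or.inl rfl)))
        (hray _ (norm_pt_cos_sin φ) (hF _ (Or.inr rfl)))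
    _ = C * (2 * J) := by ring

lemma two_mul_le_Up_Eset_pi_div_two {p : ℝ} (hp : 0 ≤ p) :
    2 * ∫⁻ t in Set.Ioo 0 1, ENNReal.ofReal (√2 / t) ^ p ≤ Up p (Eset (π / 2)) := by
  set J := ∫⁻ t in Set.Ioo 0 1, ENNReal.ofReal (√2 / t) ^ p
  set G := fun x => (⨆ y ∈ Eset (π / 2), ⨆ z ∈ Eset (π / 2), ENNReal.ofReal (menger x y z)) ^ p
  have hray : ∀ v : EuclideanSpace ℝ (Fin 2), v = pt 1 0 ∨ v = pt 0 1 →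
      J ≤ ∫⁻ x in (· • v) '' Set.Ioo (0 : ℝ) 1, G x ∂μH[1] := by
    intro v hv
    have hv₁ : ‖v‖ = 1 := by rcases hv with rfl | rfl <;> simp [norm_pt]
    rw [(isometry_smul_right hv₁).setLIntegral_image_hausdorffMeasure_one]
    refine setLIntegral_mono' measurableSet_Ioo fun t ht => ENNReal.rpow_le_rpow ?_ hp
    exact sqrt_two_div_le_iSup_menger_Eset_pi_div_two ht (by rcases hv with rfl | rfl <;> simp)
  have hdisj :
      Disjoint ((· • pt 1 0) '' Set.Ioo (0 : ℝ) 1) ((· • pt 0 1) '' Set.Ioo (0 : ℝ) 1) := by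
    rw [Set.disjoint_left]
    rintro _ ⟨a, ha, rfl⟩ ⟨b, -, hb⟩
    have := (pt_inj.1 (by simpa only [smul_pt] using hb)).1
    simp only [mul_zero, mul_one] at this
    exact ha.1.ne this
  have hsub : (· • pt 1 0) '' Set.Ioo (0 : ℝ) 1 ∪ (· • pt 0 1) '' Set.Ioo (0 : ℝ) 1 ⊆
      Eset (π / 2) := by
    rw [Eset_eq, cos_pi_div_two, sin_pi_div_two]
    exact Set.union_subset_union (Set.image_mono Set.Ioo_subset_Ico_self)
      (Set.image_mono Set.Ioo_subset_Ico_self)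
  have hmeas : MeasurableSet ((· • pt 0 1) '' Set.Ioo (0 : ℝ) 1) :=
    (isometry_smul_right (by simp [norm_pt])).isClosedEmbedding.measurableEmbedding
      |>.measurableSet_image' measurableSet_Ioo
  calc 2 * J = J + J := two_mul J
    _ ≤ ∫⁻ x in (· • pt 1 0) '' Set.Ioo (0 : ℝ) 1, G x ∂μH[1] +
          ∫⁻ x in (· • pt 0 1) '' Set.Ioo (0 : ℝ) 1, G x ∂μH[1] :=
        add_le_add (hray _ (Or.inl rfl)) (hray _ (Or.inr rfl))
    _ = ∫⁻ x in (· • pt 1 0) '' Set.Ioo (0 : ℝ) 1 ∪ (· • pt 0 1) '' Set.Ioo (0 : ℝ) 1,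
          G x ∂μH[1] := (lintegral_union hmeas hdisj).symm
    _ ≤ Up p (Eset (π / 2)) := lintegral_mono_set hsub

/-- `U_p(E_φ) ≤ c(φ)^p · U_p(E_{π/2})`. -/
theorem Up_Eset_le (φ : ℝ) :
    ∃ c : ℝ, 0 < c ∧ ∀ p : ℝ, 0 < p →
      Up p (Eset φ) ≤ ENNReal.ofReal (c ^ p) * Up p (Eset (π / 2)) := by
  by_cases hsin : sin φ = 0
  · refine ⟨1, one_pos, fun p hp => ?_⟩
    rw [Up_eq_zero_of_subset_span (measurableSet_Eset φ) (Eset_subset_span_of_sin_eq_zero hsin) hp]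
    exact zero_le
  refine ⟨√2 / |sin φ|, by positivity, fun p hp => ?_⟩
  calc Up p (Eset φ) ≤ ENNReal.ofReal ((√2 / |sin φ|) ^ p) *
        (2 * ∫⁻ t in Set.Ioo 0 1, ENNReal.ofReal (√2 / t) ^ p) :=
      Up_Eset_le_of_sin_ne_zero hsin hp
    _ ≤ ENNReal.ofReal ((√2 / |sin φ|) ^ p) * Up p (Eset (π / 2)) := by
      gcongr; exact two_mul_le_Up_Eset_pi_div_two hp.le
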